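/- arXiv:2604.13739 — 5 statements merged into one kernel-verified Lean document; each statement's English description precedes it below -/
import Mathlib

section
/- Let Λ be an N×N real diagonal matrix with diagonal entries 0 < λ = λ_1 ≤ λ_2 ≤ … ≤ λ_N, let T ≥ 1, let b_1, …, b_T ∈ ℝ^N satisfy ‖b_τ‖ ≤ 1 for all τ, and for t ≥ 1 define B_t := Λ + Σ_{τ=1}^{t−1} b_τ b_τᵀ. Let d be the effective dimension. Then for every t ≤ T + 1: ln( det(B_t) / det(Λ) ) ≤ 2 d ln( 1 + T/λ ). -/
set_option autoImplicit false

open Matrix Finset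

/-!
By Hadamard's inequality, `det B_t ≤ ∏ᵢ (λᵢ + mᵢ)` with `mᵢ = ∑_τ b_τ,ᵢ²`, so the log-ratio is at
most `∑ᵢ log (1 + mᵢ/λᵢ)`, where `∑ᵢ mᵢ ≤ T` since each `‖b_τ‖ ≤ 1`. Each of the first `d` terms
is at most `log (1 + T/λ)`. For the remaining ones `log (1 + y) ≤ y` and `λᵢ ≥ λ_{d+1}` bound their
sum by `T/λ_{d+1}`, and maximality of `d` (index `d + 1` fails the defining inequality) says
exactly that `T/λ_{d+1} < d log (1 + T/λ)`.

Hadamard's inequality itself follows by rescaling `A` to unit diagonal and bounding each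
eigenvalue by `μ ≤ exp (μ - 1)`, which gives `det ≤ exp (trace - n) = 1`.
-/

namespace Matrix

variable {n : Type*} [Fintype n]

theorem trace_sum_vecMulVec_self_le_card {ι : Type*} (s : Finset ι) {b : ι → n → ℝ}
    (hb : ∀ τ ∈ s, b τ ⬝ᵥ b τ ≤ 1) :
    (∑ τ ∈ s, vecMulVec (b τ) (b τ)).trace ≤ #s := by
  rw [trace_sum]
  simpa using sum_le_card_nsmul s _ _ fun τ hτ => (trace_vecMulVec (b τ) (b τ)).trans_le (hb τ hτ)

variable [DecidableEq n]

theorem PosSemidef.det_le_exp_trace_sub_card {A : Matrix n n ℝ} (hA : A.PosSemidef) :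
    A.det ≤ Real.exp (A.trace - Fintype.card n) := by
  have hμ := hA.eigenvalues_nonneg
  rw [hA.1.det_eq_prod_eigenvalues, hA.1.trace_eq_sum_eigenvalues]
  simp only [RCLike.ofReal_real_eq_id, id]
  calc ∏ i, hA.1.eigenvalues i ≤ ∏ i, Real.exp (hA.1.eigenvalues i - 1) :=
        prod_le_prod (fun i _ => hμ i) fun i _ => by
          linarith [Real.add_one_le_exp (hA.1.eigenvalues i - 1)]
    _ = Real.exp (∑ i, hA.1.eigenvalues i - Fintype.card n) := by
        rw [← Real.exp_sum, sum_sub_distrib]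
        simp

theorem PosDef.det_le_prod_diag {A : Matrix n n ℝ} (hA : A.PosDef) : A.det ≤ ∏ i, A i i := by
  set D := diagonal fun i => (Real.sqrt (A i i))⁻¹
  have hsq : ∀ i, Real.sqrt (A i i) * Real.sqrt (A i i) = A i i := fun i =>
    Real.mul_self_sqrt hA.diag_pos.le
  have hAD : (D * A * Dᴴ).PosSemidef := hA.posSemidef.mul_mul_conjTranspose_same D
  have hdiag : ∀ i, (D * A * Dᴴ) i i = 1 := fun i => by
    simp only [D, diagonal_conjTranspose, diagonal_mul, mul_diagonal, star_trivial]
    rw [mul_comm, ← mul_assoc, ← mul_inv, hsq, inv_mul_cancel₀ hA.diag_pos.ne']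
  have hdet : (D * A * Dᴴ).det = A.det / ∏ i, A i i := by
    simp only [D, diagonal_conjTranspose, det_mul, det_diagonal, star_trivial]
    rw [mul_comm, ← mul_assoc, ← prod_mul_distrib, div_eq_mul_inv, ← prod_inv_distrib, mul_comm]
    simp only [← mul_inv, hsq]
  have hle := hAD.det_le_exp_trace_sub_card
  simp only [trace, diag_apply, hdiag, sum_const, card_univ, nsmul_eq_mul, mul_one, sub_self,
    Real.exp_zero, hdet] at hle
  rwa [div_le_one (prod_pos fun i _ => hA.diag_pos)] at hle

theorem log_det_diagonal_add_div_le {lam : n → ℝ} (hlam : ∀ i, 0 < lam i) {S : Matrix n n ℝ}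
    (hS : S.PosSemidef) :
    Real.log ((diagonal lam + S).det / (diagonal lam).det) ≤
      ∑ i, Real.log (1 + S i i / lam i) := by
  have hA : (diagonal lam + S).PosDef := (posDef_diagonal_iff.mpr hlam).add_posSemidef hS
  have hprod : (diagonal lam).det = ∏ i, lam i := det_diagonal
  have hratio : (diagonal lam + S).det / (diagonal lam).det ≤ ∏ i, (1 + S i i / lam i) := by
    rw [hprod, div_le_iff₀ (prod_pos fun i _ => hlam i), ← prod_mul_distrib]
    refine hA.det_le_prod_diag.trans_eq (prod_congr rfl fun i _ => ?_)
    rw [add_apply, diagonal_apply_eq]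
    field_simp [(hlam i).ne']
  rw [← Real.log_prod fun i _ => (add_pos_of_pos_of_nonneg one_pos
    (div_nonneg hS.diag_nonneg (hlam i).le)).ne']
  exact Real.log_le_log (div_pos hA.det_pos (hprod ▸ prod_pos fun i _ => hlam i)) hratio

end Matrix

section LogSum

variable {ι : Type*} (s : Finset ι) {x lam : ι → ℝ} {μ : ℝ}

theorem sum_log_one_add_div_le_card_mul {T : ℝ} (hμ : 0 < μ) (hx : ∀ i ∈ s, 0 ≤ x i)
    (hxT : ∀ i ∈ s, x i ≤ T) (hlam : ∀ i ∈ s, μ ≤ lam i) :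
    ∑ i ∈ s, Real.log (1 + x i / lam i) ≤ #s * Real.log (1 + T / μ) := by
  rw [← nsmul_eq_mul]
  refine sum_le_card_nsmul s _ _ fun i hi => Real.log_le_log ?_ ?_
  · have := div_nonneg (hx i hi) (hμ.trans_le (hlam i hi)).le
    linarith
  · have := div_le_div₀ ((hx i hi).trans (hxT i hi)) (hxT i hi) hμ (hlam i hi)
    linarith

theorem sum_log_one_add_div_le_sum_div (hμ : 0 < μ) (hx : ∀ i ∈ s, 0 ≤ x i)
    (hlam : ∀ i ∈ s, μ ≤ lam i) :
    ∑ i ∈ s, Real.log (1 + x i / lam i) ≤ (∑ i ∈ s, x i) / μ := by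
  rw [sum_div]
  refine sum_le_sum fun i hi => ?_
  have hxlam := div_nonneg (hx i hi) (hμ.trans_le (hlam i hi)).le
  calc Real.log (1 + x i / lam i) ≤ x i / lam i := by
        linarith [Real.log_le_sub_one_of_pos (by linarith : 0 < 1 + x i / lam i)]
    _ ≤ x i / μ := div_le_div_of_nonneg_left (hx i hi) hμ (hlam i hi)

end LogSum

theorem sum_log_one_add_div_le_two_mul_log {N d : ℕ} {T : ℝ} (hT : 0 < T) {lam : ℕ → ℝ}
    (hpos : 0 < lam 1) (hmono : ∀ i j, 1 ≤ i → i ≤ j → j ≤ N → lam i ≤ lam j)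
    {x : Fin N → ℝ} (hx : ∀ i, 0 ≤ x i) (hsum : ∑ i, x i ≤ T)
    (hnext : d < N → T / Real.log (1 + T / lam 1) < d * lam (d + 1)) :
    ∑ i : Fin N, Real.log (1 + x i / lam (i.1 + 1)) ≤ 2 * d * Real.log (1 + T / lam 1) := by
  set L := Real.log (1 + T / lam 1)
  have hL : 0 < L := Real.log_pos (by linarith [div_pos hT hpos])
  have hxT : ∀ i, x i ≤ T := fun i =>
    (single_le_sum (fun j _ => hx j) (mem_univ i)).trans hsum
  rw [← sum_filter_add_sum_filter_not univ fun i : Fin N => i.1 < d]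
  have hhead : ∑ i ∈ univ.filter (fun i : Fin N => i.1 < d), Real.log (1 + x i / lam (i.1 + 1))
      ≤ d * L := by
    refine (sum_log_one_add_div_le_card_mul _ hpos (fun i _ => hx i) (fun i _ => hxT i)
      fun i _ => hmono 1 _ le_rfl (by omega) (by omega)).trans ?_
    have hcard : #(univ.filter fun i : Fin N => i.1 < d) ≤ d := by
      simpa using card_le_card_of_injOn Fin.val (fun i hi => by simpa using hi)
        Fin.val_injective.injOn (t := range d)
    gcongr
  have htail : ∑ i ∈ univ.filter (fun i : Fin N => ¬ i.1 < d), Real.log (1 + x i / lam (i.1 + 1))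
      ≤ d * L := by
    rcases lt_or_ge d N with hdN | hNd
    · have hlam : 0 < lam (d + 1) := hpos.trans_le (hmono 1 _ le_rfl (by omega) (by omega))
      refine (sum_log_one_add_div_le_sum_div _ hlam (fun i _ => hx i) fun i hi =>
        hmono _ _ (by omega) (by simp only [mem_filter, mem_univ, true_and] at hi; omega) (by omega)).trans ?_
      calc (∑ i ∈ univ.filter (fun i : Fin N => ¬ i.1 < d), x i) / lam (d + 1)
          ≤ T / lam (d + 1) := by
            gcongr
            exact (sum_le_sum_of_subset_of_nonneg (subset_univ _) fun i _ _ => hx i).trans hsum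
        _ ≤ d * L := by
            have := hnext hdN
            rw [div_lt_iff₀ hL] at this
            rw [div_le_iff₀ hlam]
            linarith
    · rw [filter_false_of_mem fun i _ => by omega, sum_empty]
      positivity
  linarith

theorem log_det_ratio_effective_dim_general
    (N T : ℕ) (hT : 1 ≤ T) (lam : ℕ → ℝ) (hpos : 0 < lam 1)
    (hmono : ∀ i j, 1 ≤ i → i ≤ j → j ≤ N → lam i ≤ lam j)
    (Λ : Matrix (Fin N) (Fin N) ℝ)
    (hΛ : Λ = Matrix.diagonal (fun i : Fin N => lam (i.1 + 1)))
    (b : ℕ → (Fin N → ℝ))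
    (hb : ∀ τ, 1 ≤ τ → τ ≤ T → Real.sqrt (b τ ⬝ᵥ b τ) ≤ 1)
    (B : ℕ → Matrix (Fin N) (Fin N) ℝ)
    (hB : ∀ t, B t = Λ + ∑ τ ∈ Finset.Icc 1 (t - 1), Matrix.vecMulVec (b τ) (b τ))
    (d : ℕ)
    (hdmax : ∀ d', 1 ≤ d' → d' ≤ N →
      ((d' : ℝ) - 1) * lam d' ≤ T / Real.log (1 + T / lam 1) → d' ≤ d)
    (t : ℕ) (ht : t ≤ T + 1) :
    Real.log ((B t).det / Λ.det) ≤ 2 * d * Real.log (1 + T / lam 1) := by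
  set S := ∑ τ ∈ Icc 1 (t - 1), vecMulVec (b τ) (b τ)
  have hS : S.PosSemidef :=
    posSemidef_sum _ fun τ _ => by simpa using posSemidef_vecMulVec_self_star (b τ)
  have htrace : ∑ i, S i i ≤ T := by
    have := trace_sum_vecMulVec_self_le_card (Icc 1 (t - 1)) fun τ hτ => by
      rw [mem_Icc] at hτ
      exact Real.sqrt_le_one.mp (hb τ hτ.1 (by omega))
    simp only [Nat.card_Icc] at this
    exact this.trans (by exact_mod_cast (by omega : t + 1 - 1 - 1 ≤ T))
  have hnext : d < N → (T : ℝ) / Real.log (1 + T / lam 1) < d * lam (d + 1) := fun hdN => by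
    by_contra! h
    have := hdmax (d + 1) (by omega) hdN (by push_cast; linarith)
    omega
  rw [hB, hΛ]
  exact (log_det_diagonal_add_div_le (fun i => hpos.trans_le (hmono 1 _ le_rfl (by omega)
    (by omega))) hS).trans (sum_log_one_add_div_le_two_mul_log (by exact_mod_cast hT) hpos hmono
    (fun i => hS.diag_nonneg) htrace hnext)

/-- Lemma 5 (Lemma 7 of Valko et al. 2014): with `Λ` diagonal with entries
`0 < λ = λ_1 ≤ … ≤ λ_N`, vectors `b_τ` of Euclidean norm at most `1`,
`B_t = Λ + ∑_{τ=1}^{t-1} b_τ b_τᵀ` and `d` the effective dimension, for every `t ≤ T + 1`,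
`ln(det(B_t)/det(Λ)) ≤ 2 d ln(1 + T/λ)`. -/
theorem log_det_ratio_effective_dim
    (N T : ℕ) (hT : 1 ≤ T) (lam : ℕ → ℝ) (hpos : 0 < lam 1)
    (hmono : ∀ i j, 1 ≤ i → i ≤ j → j ≤ N → lam i ≤ lam j)
    (Λ : Matrix (Fin N) (Fin N) ℝ)
    (hΛ : Λ = Matrix.diagonal (fun i : Fin N => lam (i.1 + 1)))
    (b : ℕ → (Fin N → ℝ))
    (hb : ∀ τ, 1 ≤ τ → τ ≤ T → Real.sqrt (b τ ⬝ᵥ b τ) ≤ 1)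
    (B : ℕ → Matrix (Fin N) (Fin N) ℝ)
    (hB : ∀ t, B t = Λ + ∑ τ ∈ Finset.Icc 1 (t - 1), Matrix.vecMulVec (b τ) (b τ))
    (d : ℕ) (hd1 : 1 ≤ d) (hdN : d ≤ N)
    (hdcond : ((d : ℝ) - 1) * lam d ≤ T / Real.log (1 + T / lam 1))
    (hdmax : ∀ d', 1 ≤ d' → d' ≤ N →
      ((d' : ℝ) - 1) * lam d' ≤ T / Real.log (1 + T / lam 1) → d' ≤ d)
    (t : ℕ) (ht : t ≤ T + 1) :
    Real.log ((B t).det / Λ.det) ≤ 2 * d * Real.log (1 + T / lam 1) :=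
  log_det_ratio_effective_dim_general N T hT lam hpos hmono Λ hΛ b hb B hB d hdmax t ht
end

section
/- Let B be a symmetric positive definite N×N real matrix, μ̂ ∈ ℝ^N, v > 0, and b_1, …, b_N ∈ ℝ^N. Let T ≥ 1 and N ≥ 1 be integers with T·N ≥ 2. Let ξ be a random vector in ℝ^N whose law is the N-fold product of gaussianReal 0 1, and set μ̃ := μ̂ + v B^{−1/2} ξ. Then with probability at least 1 − 1/T², simultaneously for all i ∈ {1,…,N}: |b_iᵀμ̃ − b_iᵀμ̂| ≤ v ‖b_i‖_{B^{−1}} √(4 ln(TN)). -/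
/-!
Write `A = B^{-1/2}`, so that `A` is symmetric with `A Aᵀ = B⁻¹`. Then
`b_iᵀμ̃ - b_iᵀμ̂ = v ⟪Aᵀ b_i, ξ⟫`, and `⟪c, ξ⟫ ∼ N(0, ‖c‖²)` for a standard Gaussian vector `ξ`,
with `‖Aᵀ b_i‖² = ‖b_i‖²_{B⁻¹}`. For a standard Gaussian `Z`, shifting the mean (Cameron–Martin)
gives `P(Z > s) = E[e^{-sZ - s²/2}; Z > 0] ≤ e^{-s²/2} / 2`, hence `P(|Z| > s) ≤ e^{-s²/2}`;
keeping the factor `1/2` matters, since `2 e^{-s²/2}` would not suffice when `N = 1`.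
A union bound over the `N` arms with `s² = 4 log (TN)` bounds the failure probability by
`N (TN)⁻² ≤ T⁻²`.
-/

set_option autoImplicit false

open MeasureTheory ProbabilityTheory Matrix
open Real Set
open scoped NNReal ENNReal

namespace ProbabilityTheory

lemma gaussianReal_one_eq_withDensity (a : ℝ) :
    gaussianReal a 1 = (gaussianReal 0 1).withDensity
      (fun t => ENNReal.ofReal (exp (a * t - a ^ 2 / 2))) := by
  rw [gaussianReal_of_var_ne_zero _ one_ne_zero, gaussianReal_of_var_ne_zero _ one_ne_zero,
    ← withDensity_mul _ (measurable_gaussianPDF _ _) (by fun_prop)]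
  congr 1
  ext t
  rw [Pi.mul_apply, gaussianPDF, gaussianPDF, ← ENNReal.ofReal_mul (gaussianPDFReal_nonneg _ _ _)]
  simp only [gaussianPDFReal, NNReal.coe_one, mul_one, sub_zero, mul_assoc, ← exp_add]
  ring_nf

lemma gaussianReal_zero_Ioi_le_half (v : ℝ≥0) : gaussianReal 0 v (Ioi 0) ≤ 2⁻¹ := by
  have hsymm : gaussianReal 0 v (Iio 0) = gaussianReal 0 v (Ioi 0) := by
    calc gaussianReal 0 v (Iio 0) = (gaussianReal 0 v).map (fun t => -t) (Ioi 0) := by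
          rw [Measure.map_apply measurable_neg measurableSet_Ioi]
          simp
      _ = gaussianReal 0 v (Ioi 0) := by rw [gaussianReal_map_neg, neg_zero]
  rw [ENNReal.le_inv_iff_mul_le, mul_two]
  calc gaussianReal 0 v (Ioi 0) + gaussianReal 0 v (Ioi 0)
      = gaussianReal 0 v (Ioi 0 ∪ Iio 0) := by
        rw [measure_union Ioi_disjoint_Iio_same measurableSet_Iio, hsymm]
    _ ≤ 1 := prob_le_one

lemma gaussianReal_zero_one_Ioi_le {s : ℝ} (hs : 0 ≤ s) :
    gaussianReal 0 1 (Ioi s) ≤ 2⁻¹ * ENNReal.ofReal (exp (-s ^ 2 / 2)) := by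
  have hshift : gaussianReal 0 1 (Ioi s) = gaussianReal (-s) 1 (Ioi 0) := by
    rw [← zero_sub, ← gaussianReal_map_sub_const, Measure.map_apply (measurable_sub_const s)
      measurableSet_Ioi, Set.preimage_sub_const_Ioi, zero_add]
  calc gaussianReal 0 1 (Ioi s)
      = ∫⁻ t in Ioi 0, ENNReal.ofReal (exp (-s * t - (-s) ^ 2 / 2)) ∂gaussianReal 0 1 := by
        rw [hshift, gaussianReal_one_eq_withDensity, withDensity_apply _ measurableSet_Ioi]
    _ ≤ ∫⁻ _ in Ioi 0, ENNReal.ofReal (exp (-s ^ 2 / 2)) ∂gaussianReal 0 1 := by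
        refine setLIntegral_mono measurable_const fun t (ht : 0 < t) => ?_
        gcongr
        nlinarith
    _ = ENNReal.ofReal (exp (-s ^ 2 / 2)) * gaussianReal 0 1 (Ioi 0) := setLIntegral_const _ _
    _ ≤ 2⁻¹ * ENNReal.ofReal (exp (-s ^ 2 / 2)) := by
        rw [mul_comm]
        gcongr
        exact gaussianReal_zero_Ioi_le_half 1

lemma gaussianReal_zero_one_abs_gt_le {s : ℝ} (hs : 0 ≤ s) :
    gaussianReal 0 1 {t | s < |t|} ≤ ENNReal.ofReal (exp (-s ^ 2 / 2)) := by
  have hneg : gaussianReal 0 1 ((fun t => -t) ⁻¹' Ioi s) = gaussianReal 0 1 (Ioi s) := by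
    rw [← Measure.map_apply measurable_neg measurableSet_Ioi, gaussianReal_map_neg, neg_zero]
  have hsplit : {t : ℝ | s < |t|} = Ioi s ∪ (fun t => -t) ⁻¹' Ioi s := by
    ext t
    exact lt_abs (a := s) (b := t)
  calc gaussianReal 0 1 {t | s < |t|}
      ≤ gaussianReal 0 1 (Ioi s) + gaussianReal 0 1 ((fun t => -t) ⁻¹' Ioi s) := by
        rw [hsplit]
        exact measure_union_le _ _
    _ ≤ 2⁻¹ * ENNReal.ofReal (exp (-s ^ 2 / 2)) + 2⁻¹ * ENNReal.ofReal (exp (-s ^ 2 / 2)) := by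
        rw [hneg]
        gcongr <;> exact gaussianReal_zero_one_Ioi_le hs
    _ = ENNReal.ofReal (exp (-s ^ 2 / 2)) := by
        rw [← add_mul, ENNReal.inv_two_add_inv_two, one_mul]

lemma gaussianReal_zero_abs_gt_le (v : ℝ≥0) {s : ℝ} (hs : 0 ≤ s) :
    gaussianReal 0 v {t | √v * s < |t|} ≤ ENNReal.ofReal (exp (-s ^ 2 / 2)) := by
  have hscale : gaussianReal 0 v = (gaussianReal 0 1).map (√v * ·) := by
    rw [gaussianReal_map_const_mul, mul_zero, mul_one]
    congr
    ext
    exact (sq_sqrt v.2).symm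
  rw [hscale, Measure.map_apply (measurable_const_mul _)
    (measurableSet_lt (by fun_prop) (by fun_prop))]
  refine (measure_mono fun t (ht : √v * s < |√v * t|) => ?_).trans
    (gaussianReal_zero_one_abs_gt_le hs)
  rw [abs_mul, abs_of_nonneg (sqrt_nonneg _)] at ht
  exact lt_of_mul_lt_mul_left ht (sqrt_nonneg _)

lemma map_dotProduct_pi_gaussianReal {ι : Type*} [Fintype ι] (c : ι → ℝ) :
    (Measure.pi fun _ : ι => gaussianReal 0 1).map (c ⬝ᵥ ·) =
      gaussianReal 0 (c ⬝ᵥ c).toNNReal := by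
  set L : StrongDual ℝ (EuclideanSpace ℝ ι) := innerSL ℝ (WithLp.toLp 2 c)
  have hL : (c ⬝ᵥ ·) = L ∘ WithLp.toLp 2 := by
    ext x
    simp [L, PiLp.inner_apply, dotProduct, mul_comm]
  have hnorm : ‖L‖ ^ 2 = c ⬝ᵥ c := by
    rw [innerSL_apply_norm, EuclideanSpace.real_norm_sq_eq]
    simp [dotProduct, sq]
  rw [hL, ← Measure.map_map L.continuous.measurable (by fun_prop), map_pi_eq_stdGaussian,
    IsGaussian.map_eq_gaussianReal, integral_strongDual_stdGaussian, variance_dual_stdGaussian,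
    hnorm]

lemma pi_gaussianReal_abs_dotProduct_gt_le {ι : Type*} [Fintype ι] (c : ι → ℝ) {s : ℝ}
    (hs : 0 ≤ s) :
    Measure.pi (fun _ : ι => gaussianReal 0 1) {x | √(c ⬝ᵥ c) * s < |c ⬝ᵥ x|} ≤
      ENNReal.ofReal (exp (-s ^ 2 / 2)) := by
  have hmeas : Measurable (c ⬝ᵥ ·) := by fun_prop
  have hcc : √(c ⬝ᵥ c) = √((c ⬝ᵥ c).toNNReal : ℝ) := by
    rw [Real.coe_toNNReal (c ⬝ᵥ c) (Finset.sum_nonneg fun i _ => mul_self_nonneg (c i))]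
  rw [← preimage_ofPred_eq (p := fun t => √(c ⬝ᵥ c) * s < |t|),
    ← Measure.map_apply hmeas (measurableSet_lt (by fun_prop) (by fun_prop)),
    map_dotProduct_pi_gaussianReal, hcc]
  exact gaussianReal_zero_abs_gt_le _ hs

lemma pi_gaussianReal_exists_abs_dotProduct_gt_le {ι κ : Type*} [Fintype ι] [Fintype κ]
    (c : κ → ι → ℝ) {s : ℝ} (hs : 0 ≤ s) :
    Measure.pi (fun _ : ι => gaussianReal 0 1) {x | ∃ k, √(c k ⬝ᵥ c k) * s < |c k ⬝ᵥ x|} ≤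
      Fintype.card κ * ENNReal.ofReal (exp (-s ^ 2 / 2)) := by
  rw [ofPred_exists]
  calc _ ≤ ∑ k, Measure.pi (fun _ : ι => gaussianReal 0 1) {x | √(c k ⬝ᵥ c k) * s < |c k ⬝ᵥ x|} :=
        measure_iUnion_fintype_le _ _
    _ ≤ ∑ _k : κ, ENNReal.ofReal (exp (-s ^ 2 / 2)) :=
        Finset.sum_le_sum fun k _ => pi_gaussianReal_abs_dotProduct_gt_le (c k) hs
    _ = Fintype.card κ * ENNReal.ofReal (exp (-s ^ 2 / 2)) := by
        rw [Finset.sum_const, Finset.card_univ, nsmul_eq_mul]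

end ProbabilityTheory

lemma MeasureTheory.ofReal_one_sub_le_of_measure_compl_le {α : Type*} [MeasurableSpace α]
    {μ : Measure α} [IsProbabilityMeasure μ] {s : Set α} {a : ℝ} (ha : 0 ≤ a)
    (h : μ sᶜ ≤ ENNReal.ofReal a) : ENNReal.ofReal (1 - a) ≤ μ s := by
  rw [ENNReal.ofReal_sub _ ha, ENNReal.ofReal_one, tsub_le_iff_right]
  calc 1 = μ univ := measure_univ.symm
    _ ≤ μ s + μ sᶜ := measure_univ_le_add_compl s
    _ ≤ μ s + ENNReal.ofReal a := by gcongr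

lemma Matrix.PosSemidef.transpose_cfc_sqrt_mul_cfc_sqrt {n : Type*} [Fintype n] [DecidableEq n]
    {B : Matrix n n ℝ} (hB : B.PosSemidef) : (cfc Real.sqrt B)ᵀ * cfc Real.sqrt B = B := by
  have hsa : IsSelfAdjoint (cfc Real.sqrt B) := cfc_predicate _ _
  rw [← conjTranspose_eq_transpose_of_trivial, ← star_eq_conjTranspose, hsa.star_eq,
    ← cfc_mul Real.sqrt Real.sqrt B]
  conv_rhs => rw [← cfc_id' ℝ B hB.1]
  refine cfc_congr fun x hx => ?_
  rw [hB.1.spectrum_real_eq_range_eigenvalues] at hx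
  obtain ⟨i, rfl⟩ := hx
  exact Real.mul_self_sqrt (hB.eigenvalues_nonneg i)

lemma Matrix.vecMul_dotProduct_vecMul_self {m n R : Type*} [Fintype m] [Fintype n]
    [CommSemiring R] (x : m → R) (A : Matrix m n R) :
    (x ᵥ* A) ⬝ᵥ (x ᵥ* A) = x ⬝ᵥ (A * Aᵀ) *ᵥ x := by
  rw [← dotProduct_mulVec, ← mulVec_transpose, mulVec_mulVec]

lemma mul_exp_neg_sqrt_four_log_mul_sq_le {x y : ℝ} (hx : 1 ≤ x) (hy : 1 ≤ y) :
    y * exp (-√(4 * log (x * y)) ^ 2 / 2) ≤ 1 / x ^ 2 := by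
  have hxy : 1 ≤ x * y := one_le_mul_of_one_le_of_one_le hx hy
  have hexp : exp (-√(4 * log (x * y)) ^ 2 / 2) = ((x * y) ^ 2)⁻¹ := by
    rw [sq_sqrt (mul_nonneg zero_le_four (log_nonneg hxy)),
      show -(4 * log (x * y)) / 2 = -log ((x * y) ^ 2) by rw [log_pow]; push_cast; ring,
      exp_neg, exp_log (by positivity)]
  rw [hexp, mul_pow, mul_inv, ← mul_assoc, mul_comm y, mul_assoc, one_div]
  calc (x ^ 2)⁻¹ * (y * (y ^ 2)⁻¹) ≤ (x ^ 2)⁻¹ * 1 := by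
        gcongr
        rw [sq, mul_inv, ← mul_assoc, mul_inv_cancel₀ (by positivity), one_mul]
        exact inv_le_one_of_one_le₀ hy
    _ = (x ^ 2)⁻¹ := mul_one _

theorem event_E_mutilde_general
    {Ω : Type*} [MeasurableSpace Ω] (P : Measure Ω) [IsProbabilityMeasure P]
    (N T : ℕ) (hT : 1 ≤ T) (hN : 1 ≤ N)
    (B : Matrix (Fin N) (Fin N) ℝ) (hB : B.PosDef)
    (μhat : Fin N → ℝ) (v : ℝ) (hv : 0 < v) (b : Fin N → (Fin N → ℝ))
    (ξ : Ω → (Fin N → ℝ)) (hξm : Measurable ξ)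
    (hξ : P.map ξ = Measure.pi (fun _ : Fin N => gaussianReal 0 1))
    (μtil : Ω → (Fin N → ℝ))
    (hμtil : ∀ ω, μtil ω = μhat + v • ((hB.1.eigenvectorUnitary : Matrix (Fin N) (Fin N) ℝ) *
      diagonal ((↑) ∘ (√·) ∘ hB.1.eigenvalues : Fin N → ℝ) *
      (star hB.1.eigenvectorUnitary : Matrix (Fin N) (Fin N) ℝ))⁻¹.mulVec (ξ ω)) :
    ENNReal.ofReal (1 - 1 / T ^ 2) ≤
      P {ω | ∀ i : Fin N,
        |b i ⬝ᵥ μtil ω - b i ⬝ᵥ μhat| ≤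
          v * Real.sqrt (b i ⬝ᵥ B⁻¹.mulVec (b i)) * Real.sqrt (4 * Real.log (T * N))} := by
  set A := (cfc Real.sqrt B)⁻¹ with hA_def
  have hμA (ω : Ω) : μtil ω = μhat + v • A *ᵥ ξ ω := by
    rw [hA_def, hB.1.cfc_eq]
    -- the matrix in `hμtil` is `IsHermitian.cfc` of `Real.sqrt`, unfolded
    exact hμtil ω
  have hA : A * Aᵀ = B⁻¹ := by
    rw [transpose_nonsing_inv, ← Matrix.mul_inv_rev,
      hB.posSemidef.transpose_cfc_sqrt_mul_cfc_sqrt]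
  set c : Fin N → Fin N → ℝ := fun i => b i ᵥ* A
  set s := √(4 * log (T * N))
  have hbad : P {ω | ∃ i, √(c i ⬝ᵥ c i) * s < |c i ⬝ᵥ ξ ω|} ≤ ENNReal.ofReal (1 / T ^ 2) :=
    calc _ ≤ P.map ξ {x | ∃ i, √(c i ⬝ᵥ c i) * s < |c i ⬝ᵥ x|} :=
          Measure.le_map_apply hξm.aemeasurable _
      _ ≤ N * ENNReal.ofReal (exp (-s ^ 2 / 2)) := by
          simpa [hξ] using pi_gaussianReal_exists_abs_dotProduct_gt_le c (sqrt_nonneg _)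
      _ ≤ ENNReal.ofReal (1 / T ^ 2) := by
          rw [← ENNReal.ofReal_natCast, ← ENNReal.ofReal_mul (by positivity)]
          exact ENNReal.ofReal_le_ofReal
            (mul_exp_neg_sqrt_four_log_mul_sq_le (by exact_mod_cast hT) (by exact_mod_cast hN))
  refine ofReal_one_sub_le_of_measure_compl_le (by positivity) ((measure_mono ?_).trans hbad)
  intro ω hω
  simp only [mem_compl_iff, mem_ofPred_eq, not_forall, not_le] at hω ⊢
  obtain ⟨i, hi⟩ := hω
  refine ⟨i, ?_⟩
  rw [hμA ω, dotProduct_add, add_sub_cancel_left, dotProduct_smul, smul_eq_mul,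
    dotProduct_mulVec (b i) A, abs_mul, abs_of_pos hv, ← hA,
    ← vecMul_dotProduct_vecMul_self, mul_assoc] at hi
  exact lt_of_mul_lt_mul_left hi hv.le

/-- Second claim of Lemma 6: the event `E^μ̃(t)` holds with probability at least `1 - 1/T²`.
If `μ̃ = μ̂ + v B^{-1/2} ξ` with `ξ` standard Gaussian (so `μ̃ ∼ N(μ̂, v²B⁻¹)`), then with
probability at least `1 - 1/T²`, for all arms `i`,
`|b_iᵀμ̃ − b_iᵀμ̂| ≤ v ‖b_i‖_{B⁻¹} √(4 ln(TN))`. -/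
theorem event_E_mutilde
    {Ω : Type*} [MeasurableSpace Ω] (P : Measure Ω) [IsProbabilityMeasure P]
    (N T : ℕ) (hT : 1 ≤ T) (hN : 1 ≤ N) (hTN : 2 ≤ T * N)
    (B : Matrix (Fin N) (Fin N) ℝ) (hB : B.PosDef)
    (μhat : Fin N → ℝ) (v : ℝ) (hv : 0 < v) (b : Fin N → (Fin N → ℝ))
    (ξ : Ω → (Fin N → ℝ)) (hξm : Measurable ξ)
    (hξ : P.map ξ = Measure.pi (fun _ : Fin N => gaussianReal 0 1))
    (μtil : Ω → (Fin N → ℝ))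
    (hμtil : ∀ ω, μtil ω = μhat + v • ((hB.1.eigenvectorUnitary : Matrix (Fin N) (Fin N) ℝ) *
      diagonal ((↑) ∘ (√·) ∘ hB.1.eigenvalues : Fin N → ℝ) *
      (star hB.1.eigenvectorUnitary : Matrix (Fin N) (Fin N) ℝ))⁻¹.mulVec (ξ ω)) :
    ENNReal.ofReal (1 - 1 / T ^ 2) ≤
      P {ω | ∀ i : Fin N,
        |b i ⬝ᵥ μtil ω - b i ⬝ᵥ μhat| ≤
          v * Real.sqrt (b i ⬝ᵥ B⁻¹.mulVec (b i)) * Real.sqrt (4 * Real.log (T * N))} :=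
  event_E_mutilde_general P N T hT hN B hB μhat v hv b ξ hξm hξ μtil hμtil
end

section
/- Let B be a symmetric positive definite N×N real matrix, μ, μ̃ ∈ ℝ^N, b_1, …, b_N ∈ ℝ^N, and g > 0. Let a* be an index maximizing i ↦ b_iᵀμ and define Δ_i := b_{a*}ᵀμ − b_iᵀμ. Assume that for all i ∈ {1,…,N}: |b_iᵀμ̃ − b_iᵀμ| ≤ g ‖b_i‖_{B^{−1}}. Let a be an index maximizing i ↦ b_iᵀμ̃, and let ā be any index with Δ_ā ≤ g ‖b_ā‖_{B^{−1}} (an unsaturated arm). Then Δ_a ≤ 2g ‖b_ā‖_{B^{−1}} + g ‖b_a‖_{B^{−1}}. -/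
set_option autoImplicit false

open Matrix

/-- Deterministic regret-decomposition step in the proof of Lemma 9: if for all arms `i`
`|b_iᵀμ̃ − b_iᵀμ| ≤ g ‖b_i‖_{B⁻¹}`, `a` maximizes `i ↦ b_iᵀμ̃`, and `ā` is unsaturated
(`Δ_ā ≤ g ‖b_ā‖_{B⁻¹}`), then `Δ_a ≤ 2g ‖b_ā‖_{B⁻¹} + g ‖b_a‖_{B⁻¹}`. -/
theorem regret_decomposition
    (N : ℕ) (B : Matrix (Fin N) (Fin N) ℝ) (hB : B.PosDef)
    (μ μtil : Fin N → ℝ) (b : Fin N → (Fin N → ℝ)) (g : ℝ) (hg : 0 < g)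
    (astar : Fin N) (hastar : ∀ j, b j ⬝ᵥ μ ≤ b astar ⬝ᵥ μ)
    (hE : ∀ i : Fin N, |b i ⬝ᵥ μtil - b i ⬝ᵥ μ| ≤ g * Real.sqrt (b i ⬝ᵥ B⁻¹.mulVec (b i)))
    (a : Fin N) (ha : ∀ j, b j ⬝ᵥ μtil ≤ b a ⬝ᵥ μtil)
    (abar : Fin N)
    (habar : b astar ⬝ᵥ μ - b abar ⬝ᵥ μ ≤ g * Real.sqrt (b abar ⬝ᵥ B⁻¹.mulVec (b abar))) :
    b astar ⬝ᵥ μ - b a ⬝ᵥ μ ≤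
      2 * g * Real.sqrt (b abar ⬝ᵥ B⁻¹.mulVec (b abar)) +
        g * Real.sqrt (b a ⬝ᵥ B⁻¹.mulVec (b a)) := by
  have h1 := abs_sub_le_iff.mp (hE abar)
  have h2 := abs_sub_le_iff.mp (hE a)
  have h3 := ha abar
  linarith [h1.1, h1.2, h2.1, h2.2]
end

section
/- Let λ > 0 and let B be a symmetric N×N real matrix with B − λI positive semidefinite (in particular B is positive definite). Then for any b ∈ ℝ^N with ‖b‖ ≤ 1: ‖b‖²_{B^{−1}} ≤ (2 + 2/λ) · ln(1 + ‖b‖²_{B^{−1}}). -/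
set_option autoImplicit false

open Matrix

/-!
For `t = bᵀ B⁻¹ b`, the bound `B ≥ λ I` gives `λ t ≤ ‖b‖² ≤ 1`, and `log (1 + t) ≥ t / (1 + t)` gives
`t ≤ (1 + t) log (1 + t) ≤ (1 + 1/λ) log (1 + t)`.
-/

namespace Matrix

variable {n : Type*} [DecidableEq n]

theorem PosSemidef.posDef_of_sub_smul_one {B : Matrix n n ℝ} {lam : ℝ} (hlam : 0 < lam)
    (hB : (B - lam • (1 : Matrix n n ℝ)).PosSemidef) : B.PosDef := by
  have hI : (lam • (1 : Matrix n n ℝ)).PosDef := by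
    rw [smul_one_eq_diagonal]
    exact posDef_diagonal_iff.mpr fun _ => hlam
  simpa using hI.add_posSemidef hB

variable [Fintype n]

theorem PosSemidef.mul_dotProduct_inv_mulVec_le {B : Matrix n n ℝ} {lam : ℝ} (hlam : 0 < lam)
    (hB : (B - lam • (1 : Matrix n n ℝ)).PosSemidef) (b : n → ℝ) :
    lam * (b ⬝ᵥ B⁻¹ *ᵥ b) ≤ b ⬝ᵥ b := by
  set y := B⁻¹ *ᵥ b
  have hBy : B *ᵥ y = b := by
    rw [mulVec_mulVec, mul_nonsing_inv _ (hB.posDef_of_sub_smul_one hlam).det_pos.ne'.isUnit,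
      one_mulVec]
  have hlow : lam * (y ⬝ᵥ y) ≤ b ⬝ᵥ y := by
    have h := hB.dotProduct_mulVec_nonneg y
    rwa [star_trivial, sub_mulVec, dotProduct_sub, hBy, smul_mulVec, one_mulVec, dotProduct_smul,
      smul_eq_mul, sub_nonneg, dotProduct_comm y b] at h
  -- AM-GM: `λ⟪b, y⟫ ≤ ‖b‖²/2 + λ²‖y‖²/2`, and `λ²‖y‖² ≤ λ⟪b, y⟫` by `hlow`.
  have hsq : 0 ≤ (b - lam • y) ⬝ᵥ (b - lam • y) := by
    simpa using dotProduct_star_self_nonneg (b - lam • y)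
  simp only [sub_dotProduct, dotProduct_sub, smul_dotProduct, dotProduct_smul, smul_eq_mul,
    dotProduct_comm y b] at hsq
  nlinarith [mul_le_mul_of_nonneg_left hlow hlam.le]

end Matrix

theorem Real.le_mul_log_one_add {t c : ℝ} (ht : 0 ≤ t) (htc : t ≤ c) :
    t ≤ (1 + c) * Real.log (1 + t) := by
  have h1t : 0 < 1 + t := by linarith
  have hlog : 1 - (1 + t)⁻¹ ≤ Real.log (1 + t) := Real.one_sub_inv_le_log_of_pos h1t
  have hlog_nonneg : 0 ≤ Real.log (1 + t) := Real.log_nonneg (by linarith)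
  calc t = (1 + t) * (1 - (1 + t)⁻¹) := by field_simp; ring
    _ ≤ (1 + t) * Real.log (1 + t) := by gcongr
    _ ≤ (1 + c) * Real.log (1 + t) := by gcongr

theorem matrix_norm_log_bound_general
    (N : ℕ) (lam : ℝ) (hlam : 0 < lam)
    (B : Matrix (Fin N) (Fin N) ℝ)
    (hB : (B - lam • (1 : Matrix (Fin N) (Fin N) ℝ)).PosSemidef)
    (b : Fin N → ℝ) (hb : Real.sqrt (b ⬝ᵥ b) ≤ 1) :
    b ⬝ᵥ B⁻¹.mulVec b ≤ (2 + 2 / lam) * Real.log (1 + b ⬝ᵥ B⁻¹.mulVec b) := by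
  have ht : 0 ≤ b ⬝ᵥ B⁻¹ *ᵥ b := by
    simpa using (hB.posDef_of_sub_smul_one hlam).inv.posSemidef.dotProduct_mulVec_nonneg b
  have htc : b ⬝ᵥ B⁻¹ *ᵥ b ≤ 1 / lam := by
    rw [le_div_iff₀' hlam]
    exact (hB.mul_dotProduct_inv_mulVec_le hlam b).trans (Real.sqrt_le_one.mp hb)
  calc b ⬝ᵥ B⁻¹ *ᵥ b ≤ (1 + 1 / lam) * Real.log (1 + b ⬝ᵥ B⁻¹ *ᵥ b) :=
        Real.le_mul_log_one_add ht htc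
    _ ≤ (2 + 2 / lam) * Real.log (1 + b ⬝ᵥ B⁻¹ *ᵥ b) := by
      gcongr
      · exact Real.log_nonneg (by linarith)
      all_goals norm_num

/-- Lemma 10: for any `λ > 0`, if `B` is symmetric with `B − λI` positive semidefinite and
`‖b‖ ≤ 1` (Euclidean norm), then `‖b‖²_{B⁻¹} ≤ (2 + 2/λ) ln(1 + ‖b‖²_{B⁻¹})`. -/
theorem matrix_norm_log_bound
    (N : ℕ) (lam : ℝ) (hlam : 0 < lam)
    (B : Matrix (Fin N) (Fin N) ℝ) (hBsym : B.IsSymm)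
    (hB : (B - lam • (1 : Matrix (Fin N) (Fin N) ℝ)).PosSemidef)
    (b : Fin N → ℝ) (hb : Real.sqrt (b ⬝ᵥ b) ≤ 1) :
    b ⬝ᵥ B⁻¹.mulVec b ≤ (2 + 2 / lam) * Real.log (1 + b ⬝ᵥ B⁻¹.mulVec b) :=
  matrix_norm_log_bound_general N lam hlam B hB b hb
end

section
/- Let Λ be an N×N real diagonal matrix with diagonal entries 0 < λ = λ_1 ≤ λ_2 ≤ … ≤ λ_N, let T ≥ 1, let b_1, …, b_T ∈ ℝ^N satisfy ‖b_t‖ ≤ 1 for all t, and for t ≥ 1 define B_t := Λ + Σ_{τ=1}^{t−1} b_τ b_τᵀ. Let d be the effective dimension. Then Σ_{t=1}^T ‖b_t‖_{B_t^{−1}} ≤ √( ((4 + 4λ)/λ) · d · T · ln((λ + T)/λ) ). -/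
/-!
With `q_t = b_tᵀ B_t⁻¹ b_t`, the matrix determinant lemma gives
`det B_{T+1} = det Λ · ∏_t (1 + q_t)`, and Hadamard's inequality bounds `det B_{T+1}` by the
product of its diagonal entries `λ_i + s_i`, `s_i = ∑_t b_t(i)²`. Hence
`∑_t log (1 + q_t) ≤ ∑_i log (1 + s_i / λ_i) ≤ 2 d log (1 + T / λ)` by the choice of `d`.
Since `q_t ≤ 1 / λ`, also `q_t ≤ (1 + 1 / λ) log (1 + q_t)`, and Cauchy–Schwarz gives
`(∑_t √q_t)² ≤ T ∑_t q_t`.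
-/

open Matrix Finset

namespace Matrix

variable {n : Type*} [Fintype n]

-- From the LDL factorisation `S = L D Lᵀ`: `det S = ∏ L_ii² D_i` and `S_ii = ∑_j L_ij² D_j`.
theorem PosDef.det_le_prod_diag_s13 [LinearOrder n] [LocallyFiniteOrderBot n]
    {S : Matrix n n ℝ} (hS : S.PosDef) : S.det ≤ ∏ i, S i i := by
  have := LDL.invertibleLowerInv hS
  set L := LDL.lower hS
  set D := LDL.diagEntries hS
  have hD : ∀ i, 0 ≤ D i := fun i => by
    have := ((LDL.diag_eq_lowerInv_conj hS).symm ▸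
      hS.posSemidef.mul_mul_conjTranspose_same (LDL.lowerInv hS)).diag_nonneg (i := i)
    simpa [LDL.diag, D] using this
  have hS_eq : S = L * diagonal D * Lᵀ := by
    simpa [LDL.diag] using (LDL.lower_conj_diag hS).symm
  have hL : L.BlockTriangular OrderDual.toDual :=
    blockTriangular_inv_of_blockTriangular fun _ _ hij => LDL.lowerInv_triangular hS hij
  have hdet : S.det = ∏ i, L i i ^ 2 * D i := by
    rw [hS_eq, det_mul, det_mul, det_transpose, det_of_isLowerTriangular L hL, det_diagonal,
      ← prod_mul_distrib, ← prod_mul_distrib]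
    exact prod_congr rfl fun i _ => by ring
  have hdiag : ∀ i, S i i = ∑ j, L i j ^ 2 * D j := fun i => by
    rw [hS_eq]
    simp only [mul_apply, diagonal_apply, transpose_apply, mul_ite, mul_zero, sum_ite_eq',
      mem_univ, if_true]
    exact sum_congr rfl fun j _ => by ring
  rw [hdet]
  exact prod_le_prod (fun i _ => mul_nonneg (sq_nonneg _) (hD i)) fun i _ =>
    (hdiag i).symm ▸ single_le_sum (fun j _ => mul_nonneg (sq_nonneg _) (hD j)) (mem_univ i)

theorem det_add_vecMulVec {α : Type*} [CommRing α] [DecidableEq n] {A : Matrix n n α}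
    (hA : IsUnit A.det) (u v : n → α) :
    (A + vecMulVec u v).det = A.det * (1 + v ⬝ᵥ A⁻¹ *ᵥ u) := by
  rw [vecMulVec_eq Unit, det_add_replicateCol_mul_replicateRow hA, Matrix.mul_assoc,
    ← replicateCol_mulVec, det_unique (1 + _)]
  rfl

-- With `y = A⁻¹ v`: `c ‖y‖² ≤ yᵀ A y = v ⬝ y ≤ ‖v‖ ‖y‖`.
theorem dotProduct_inv_mulVec_le [DecidableEq n] {A : Matrix n n ℝ} (hA : IsUnit A.det) {c : ℝ}
    (hc : 0 < c) (hAc : ∀ y, c * (y ⬝ᵥ y) ≤ y ⬝ᵥ A *ᵥ y) (v : n → ℝ) :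
    v ⬝ᵥ A⁻¹ *ᵥ v ≤ (v ⬝ᵥ v) / c := by
  set y := A⁻¹ *ᵥ v
  have hq : v ⬝ᵥ y = y ⬝ᵥ A *ᵥ y := by
    rw [mulVec_mulVec, mul_nonsing_inv _ hA, one_mulVec, dotProduct_comm]
  have hCS : (v ⬝ᵥ y) ^ 2 ≤ (v ⬝ᵥ v) * (y ⬝ᵥ y) := by
    simpa only [dotProduct, sq] using sum_mul_sq_le_sq_mul_sq univ v y
  have hy : c * (y ⬝ᵥ y) ≤ v ⬝ᵥ y := hq ▸ hAc y
  have hvv : 0 ≤ v ⬝ᵥ v := by simpa using dotProduct_self_star_nonneg v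
  have hyy : 0 ≤ y ⬝ᵥ y := by simpa using dotProduct_self_star_nonneg y
  have hsq : (v ⬝ᵥ y) * ((v ⬝ᵥ y) * c) ≤ (v ⬝ᵥ y) * (v ⬝ᵥ v) := by
    nlinarith [mul_le_mul_of_nonneg_left hCS hc.le, mul_le_mul_of_nonneg_left hy hvv]
  rw [le_div_iff₀ hc]
  rcases (le_trans (mul_nonneg hc.le hyy) hy).eq_or_lt with h0 | h0
  · rw [← h0, zero_mul]; exact hvv
  · exact le_of_mul_le_mul_left hsq h0

theorem PosSemidef.sum_vecMulVec_self {ι : Type*} (s : Finset ι) (b : ι → n → ℝ) :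
    (∑ τ ∈ s, vecMulVec (b τ) (b τ)).PosSemidef :=
  sum_induction _ _ (fun _ _ => PosSemidef.add) PosSemidef.zero fun τ _ =>
    posSemidef_vecMulVec_self_star (b τ)

theorem mul_dotProduct_self_le_diagonal_add [DecidableEq n] {l : n → ℝ} {c : ℝ}
    (hl : ∀ i, c ≤ l i) {P : Matrix n n ℝ} (hP : P.PosSemidef) (y : n → ℝ) :
    c * (y ⬝ᵥ y) ≤ y ⬝ᵥ (diagonal l + P) *ᵥ y := by
  have hdiag : c * (y ⬝ᵥ y) ≤ y ⬝ᵥ diagonal l *ᵥ y := by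
    simp only [mulVec_diagonal, dotProduct, mul_sum]
    exact sum_le_sum fun i _ => by nlinarith [hl i, mul_self_nonneg (y i)]
  have hP' : 0 ≤ y ⬝ᵥ P *ᵥ y := by simpa using hP.dotProduct_mulVec_nonneg y
  rw [add_mulVec, dotProduct_add]
  linarith

end Matrix

section GramSequence

variable {n : Type*} [Fintype n] {A : Matrix n n ℝ} {b : ℕ → n → ℝ} {B : ℕ → Matrix n n ℝ}

theorem posDef_of_eq_add_sum_vecMulVec (hA : A.PosDef)
    (hB : ∀ t, B t = A + ∑ τ ∈ Icc 1 (t - 1), vecMulVec (b τ) (b τ)) (t : ℕ) : (B t).PosDef :=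
  hB t ▸ hA.add_posSemidef (PosSemidef.sum_vecMulVec_self _ b)

theorem det_eq_mul_prod_one_add [DecidableEq n] (hA : A.PosDef)
    (hB : ∀ t, B t = A + ∑ τ ∈ Icc 1 (t - 1), vecMulVec (b τ) (b τ)) (k : ℕ) :
    (B (k + 1)).det = A.det * ∏ t ∈ Icc 1 k, (1 + b t ⬝ᵥ (B t)⁻¹ *ᵥ b t) := by
  induction k with
  | zero => simp [hB]
  | succ k ih =>
    have hstep : B (k + 1 + 1) = B (k + 1) + vecMulVec (b (k + 1)) (b (k + 1)) := by
      rw [hB, hB, Nat.add_sub_cancel, Nat.add_sub_cancel, sum_Icc_succ_top (Nat.le_add_left 1 k),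
        add_assoc]
    have hunit := (isUnit_iff_isUnit_det _).1 (posDef_of_eq_add_sum_vecMulVec hA hB (k + 1)).isUnit
    rw [hstep, det_add_vecMulVec hunit, ih, prod_Icc_succ_top (Nat.le_add_left 1 k), mul_assoc]

theorem dotProduct_inv_mulVec_nonneg_of_eq_add [DecidableEq n] (hA : A.PosDef)
    (hB : ∀ t, B t = A + ∑ τ ∈ Icc 1 (t - 1), vecMulVec (b τ) (b τ)) (t : ℕ) :
    0 ≤ b t ⬝ᵥ (B t)⁻¹ *ᵥ b t := by
  simpa using (posDef_of_eq_add_sum_vecMulVec hA hB t).inv.posSemidef.dotProduct_mulVec_nonneg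
    (b t)

theorem dotProduct_inv_mulVec_le_of_eq_diagonal_add [DecidableEq n] {l : n → ℝ} {c : ℝ}
    (hc : 0 < c) (hl : ∀ i, c ≤ l i)
    (hB : ∀ t, B t = diagonal l + ∑ τ ∈ Icc 1 (t - 1), vecMulVec (b τ) (b τ)) (t : ℕ) :
    b t ⬝ᵥ (B t)⁻¹ *ᵥ b t ≤ (b t ⬝ᵥ b t) / c := by
  have hA : (diagonal l).PosDef := PosDef.diagonal fun i => hc.trans_le (hl i)
  refine dotProduct_inv_mulVec_le ((isUnit_iff_isUnit_det _).1
    (posDef_of_eq_add_sum_vecMulVec hA hB t).isUnit) hc ?_ (b t)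
  exact hB t ▸ mul_dotProduct_self_le_diagonal_add hl (PosSemidef.sum_vecMulVec_self _ b)

theorem sum_log_one_add_le_sum_log_one_add_div [LinearOrder n] [LocallyFiniteOrderBot n]
    [DecidableEq n] {l : n → ℝ} (hl : ∀ i, 0 < l i)
    (hB : ∀ t, B t = diagonal l + ∑ τ ∈ Icc 1 (t - 1), vecMulVec (b τ) (b τ)) (T : ℕ) :
    ∑ t ∈ Icc 1 T, Real.log (1 + b t ⬝ᵥ (B t)⁻¹ *ᵥ b t) ≤
      ∑ i, Real.log (1 + (∑ t ∈ Icc 1 T, b t i ^ 2) / l i) := by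
  have hA : (diagonal l).PosDef := PosDef.diagonal hl
  have hq (t : ℕ) : 0 < 1 + b t ⬝ᵥ (B t)⁻¹ *ᵥ b t := by
    linarith [dotProduct_inv_mulVec_nonneg_of_eq_add hA hB t]
  have hs (i : n) : 0 < 1 + (∑ t ∈ Icc 1 T, b t i ^ 2) / l i := by
    have := hl i
    positivity
  have hdiag (i : n) : B (T + 1) i i = l i * (1 + (∑ t ∈ Icc 1 T, b t i ^ 2) / l i) := by
    rw [hB, Nat.add_sub_cancel, mul_one_add, mul_div_cancel₀ _ (hl i).ne']
    simp [Matrix.sum_apply, vecMulVec_apply, sq]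
  have hHad : (B (T + 1)).det ≤ ∏ i, B (T + 1) i i := by
    -- `det_le_prod_diag` computes `det` with the `DecidableEq` instance of the order
    convert (posDef_of_eq_add_sum_vecMulVec hA hB (T + 1)).det_le_prod_diag_s13 using 2
  have hdet : ∏ t ∈ Icc 1 T, (1 + b t ⬝ᵥ (B t)⁻¹ *ᵥ b t) ≤
      ∏ i, (1 + (∑ t ∈ Icc 1 T, b t i ^ 2) / l i) := by
    have hdetA : 0 < (diagonal l).det := hA.det_pos
    rw [← mul_le_mul_iff_right₀ hdetA, ← det_eq_mul_prod_one_add hA hB, det_diagonal,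
      ← prod_mul_distrib]
    simpa only [hdiag] using hHad
  rw [← Real.log_prod fun t _ => (hq t).ne', ← Real.log_prod fun i _ => (hs i).ne']
  exact Real.log_le_log (prod_pos fun t _ => hq t) hdet

theorem sum_sum_sq_le_card {s : Finset ℕ} (hb : ∀ t ∈ s, b t ⬝ᵥ b t ≤ 1) :
    ∑ i, ∑ t ∈ s, b t i ^ 2 ≤ #s := by
  rw [sum_comm, card_eq_sum_ones, Nat.cast_sum, Nat.cast_one]
  exact sum_le_sum fun t ht => by simpa [dotProduct, sq] using hb t ht

end GramSequence

theorem le_one_add_mul_log_one_add {x a : ℝ} (hx : 0 ≤ x) (hxa : x ≤ a) :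
    x ≤ (1 + a) * Real.log (1 + x) := by
  have hlog : x / (1 + x) ≤ Real.log (1 + x) := by
    have hx1 : x / (1 + x) = 1 - (1 + x)⁻¹ := by field_simp; ring
    exact hx1 ▸ Real.one_sub_inv_le_log_of_pos (by linarith)
  calc x = (1 + x) * (x / (1 + x)) := by field_simp
    _ ≤ (1 + a) * Real.log (1 + x) := by gcongr; linarith

theorem Fin.card_filter_val_lt_le (N d : ℕ) : #{i : Fin N | i.1 < d} ≤ d := by
  simpa using card_le_card_of_injOn Fin.val (t := range d) (fun i hi => by simpa using hi)
    Fin.val_injective.injOn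

theorem div_le_mul_log_of_maximal {N T d : ℕ} (hT : 1 ≤ T) {lam : ℕ → ℝ} (hpos : 0 < lam 1)
    (hpos' : 0 < lam (d + 1))
    (hdmax : ∀ d', 1 ≤ d' → d' ≤ N →
      ((d' : ℝ) - 1) * lam d' ≤ T / Real.log (1 + T / lam 1) → d' ≤ d) (hdN : d < N) :
    T / lam (d + 1) ≤ d * Real.log (1 + T / lam 1) := by
  have hL : 0 < Real.log (1 + T / lam 1) :=
    Real.log_pos (by have := div_pos (by exact_mod_cast hT : (0 : ℝ) < T) hpos; linarith)
  have hnot : ¬(((d + 1 : ℕ) : ℝ) - 1) * lam (d + 1) ≤ T / Real.log (1 + T / lam 1) := fun h =>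
    absurd (hdmax (d + 1) (by omega) hdN h) (by omega)
  push_cast at hnot
  rw [add_sub_cancel_right, not_le, div_lt_iff₀ hL] at hnot
  rw [div_le_iff₀ hpos']
  linarith

-- The first `d` coordinates contribute at most `log (1 + T / λ)` each, the others at most
-- `T / λ_{d+1}` in total.
theorem sum_log_one_add_div_le {N T d : ℕ} (hT : 1 ≤ T) {lam : ℕ → ℝ} (hpos : 0 < lam 1)
    (hmono : ∀ i j, 1 ≤ i → i ≤ j → j ≤ N → lam i ≤ lam j)
    (hdmax : ∀ d', 1 ≤ d' → d' ≤ N →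
      ((d' : ℝ) - 1) * lam d' ≤ T / Real.log (1 + T / lam 1) → d' ≤ d)
    {s : Fin N → ℝ} (hs : ∀ i, 0 ≤ s i) (hsum : ∑ i, s i ≤ T) :
    ∑ i : Fin N, Real.log (1 + s i / lam (i.1 + 1)) ≤ 2 * d * Real.log (1 + T / lam 1) := by
  set L := Real.log (1 + T / lam 1)
  have hL : 0 ≤ L := Real.log_nonneg (by linarith [div_nonneg (Nat.cast_nonneg T) hpos.le])
  have hlam (i : Fin N) : 0 < lam (i.1 + 1) :=
    hpos.trans_le (hmono 1 _ le_rfl (by omega) (by omega))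
  have hpos' (i : Fin N) : 0 < 1 + s i / lam (i.1 + 1) := by
    have := hs i; have := hlam i; positivity
  have hsT (i : Fin N) : s i ≤ T :=
    (single_le_sum (fun j _ => hs j) (mem_univ i)).trans hsum
  have hhead : ∑ i : Fin N with i.1 < d, Real.log (1 + s i / lam (i.1 + 1)) ≤ d * L := by
    calc ∑ i : Fin N with i.1 < d, Real.log (1 + s i / lam (i.1 + 1))
        ≤ ∑ i : Fin N with i.1 < d, L := by
          refine sum_le_sum fun i _ => Real.log_le_log (hpos' i) ?_
          gcongr
          exacts [hsT i, hmono 1 _ le_rfl (by omega) (by omega)]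
      _ ≤ d * L := by
          rw [sum_const, nsmul_eq_mul]
          gcongr
          exact_mod_cast Fin.card_filter_val_lt_le N d
  have htail : ∑ i : Fin N with ¬i.1 < d, Real.log (1 + s i / lam (i.1 + 1)) ≤ d * L := by
    by_cases hdN : d < N
    · have hlamd : 0 < lam (d + 1) := hpos.trans_le (hmono 1 _ le_rfl (by omega) hdN)
      calc ∑ i : Fin N with ¬i.1 < d, Real.log (1 + s i / lam (i.1 + 1))
          ≤ ∑ i : Fin N with ¬i.1 < d, s i / lam (d + 1) := by
            refine sum_le_sum fun i hi => ?_
            have hdi : d + 1 ≤ i + 1 := by simpa using hi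
            calc Real.log (1 + s i / lam (i.1 + 1)) ≤ s i / lam (i.1 + 1) := by
                  linarith [Real.log_le_sub_one_of_pos (hpos' i)]
              _ ≤ s i / lam (d + 1) := div_le_div_of_nonneg_left (hs i) hlamd
                  (hmono _ _ (by omega) hdi (by omega))
        _ ≤ (∑ i, s i) / lam (d + 1) := by
            rw [← sum_div]
            gcongr
            · exact fun i _ _ => hs i
            · exact subset_univ _
        _ ≤ T / lam (d + 1) := by gcongr
        _ ≤ d * L := div_le_mul_log_of_maximal hT hpos hlamd hdmax hdN
    · rw [filter_false_of_mem fun i _ => by omega, sum_empty]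
      positivity
  rw [← sum_filter_add_sum_filter_not univ fun i : Fin N => i.1 < d]
  linarith

theorem Real.sum_sqrt_le_sqrt_card_mul_sum {ι : Type*} (s : Finset ι) {f : ι → ℝ}
    (hf : ∀ i, 0 ≤ f i) : ∑ i ∈ s, √(f i) ≤ √(#s * ∑ i ∈ s, f i) := by
  simpa [Real.sqrt_mul (Nat.cast_nonneg _)] using
    Real.sum_sqrt_mul_sqrt_le s (fun _ => zero_le_one) hf

theorem sum_matrix_norms_bound_general
    (N T : ℕ) (hT : 1 ≤ T) (lam : ℕ → ℝ) (hpos : 0 < lam 1)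
    (hmono : ∀ i j, 1 ≤ i → i ≤ j → j ≤ N → lam i ≤ lam j)
    (Λ : Matrix (Fin N) (Fin N) ℝ)
    (hΛ : Λ = Matrix.diagonal (fun i : Fin N => lam (i.1 + 1)))
    (b : ℕ → (Fin N → ℝ))
    (hb : ∀ t, 1 ≤ t → t ≤ T → Real.sqrt (b t ⬝ᵥ b t) ≤ 1)
    (B : ℕ → Matrix (Fin N) (Fin N) ℝ)
    (hB : ∀ t, B t = Λ + ∑ τ ∈ Finset.Icc 1 (t - 1), Matrix.vecMulVec (b τ) (b τ))
    (d : ℕ)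
    (hdmax : ∀ d', 1 ≤ d' → d' ≤ N →
      ((d' : ℝ) - 1) * lam d' ≤ T / Real.log (1 + T / lam 1) → d' ≤ d) :
    ∑ t ∈ Finset.Icc 1 T, Real.sqrt (b t ⬝ᵥ (B t)⁻¹.mulVec (b t)) ≤
      Real.sqrt ((4 + 4 * lam 1) / lam 1 * d * T * Real.log ((lam 1 + T) / lam 1)) := by
  subst hΛ
  set q := fun t => b t ⬝ᵥ (B t)⁻¹ *ᵥ b t
  set L := Real.log (1 + T / lam 1)
  have hL : 0 ≤ L := Real.log_nonneg (by linarith [div_nonneg (Nat.cast_nonneg T) hpos.le])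
  have hlam (i : Fin N) : lam 1 ≤ lam (i.1 + 1) := hmono 1 _ le_rfl (by omega) (by omega)
  have hl (i : Fin N) : 0 < lam (i.1 + 1) := hpos.trans_le (hlam i)
  have hbb (t : ℕ) (ht : t ∈ Icc 1 T) : b t ⬝ᵥ b t ≤ 1 :=
    Real.sqrt_le_one.1 (hb t (mem_Icc.1 ht).1 (mem_Icc.1 ht).2)
  have hq0 (t : ℕ) : 0 ≤ q t :=
    dotProduct_inv_mulVec_nonneg_of_eq_add (PosDef.diagonal hl) hB t
  have hq1 (t : ℕ) (ht : t ∈ Icc 1 T) : q t ≤ 1 / lam 1 :=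
    (dotProduct_inv_mulVec_le_of_eq_diagonal_add hpos hlam hB t).trans
      (div_le_div_of_nonneg_right (hbb t ht) hpos.le)
  have hsumq : ∑ t ∈ Icc 1 T, q t ≤ (1 + 1 / lam 1) * (2 * d * L) :=
    calc ∑ t ∈ Icc 1 T, q t ≤ ∑ t ∈ Icc 1 T, (1 + 1 / lam 1) * Real.log (1 + q t) :=
          sum_le_sum fun t ht => le_one_add_mul_log_one_add (hq0 t) (hq1 t ht)
      _ ≤ (1 + 1 / lam 1) * (2 * d * L) := by
          rw [← mul_sum]
          gcongr
          refine (sum_log_one_add_le_sum_log_one_add_div hl hB T).trans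
            (sum_log_one_add_div_le hT hpos hmono hdmax (fun i => sum_nonneg fun t _ => sq_nonneg _)
              (by simpa using sum_sum_sq_le_card hbb))
  have hL : Real.log ((lam 1 + T) / lam 1) = L := by rw [add_div, div_self hpos.ne']
  have hL0 : 0 ≤ L := Real.log_nonneg (by linarith [div_nonneg (Nat.cast_nonneg T) hpos.le])
  calc ∑ t ∈ Icc 1 T, √(q t) ≤ √(T * ∑ t ∈ Icc 1 T, q t) := by
        simpa using Real.sum_sqrt_le_sqrt_card_mul_sum (Icc 1 T) hq0
    _ ≤ √((4 + 4 * lam 1) / lam 1 * d * T * L) := by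
        apply Real.sqrt_le_sqrt
        calc T * ∑ t ∈ Icc 1 T, q t ≤ T * ((1 + 1 / lam 1) * (2 * d * L)) := by gcongr
          _ = (2 + 2 * lam 1) / lam 1 * d * T * L := by field_simp; ring
          _ ≤ (4 + 4 * lam 1) / lam 1 * d * T * L := by gcongr <;> norm_num
    _ = _ := by rw [hL]

/-- Deterministic chain used in the proof of Theorem 1 (Cauchy–Schwarz with Lemmas 2, 5
and 10): with `Λ` diagonal with entries `0 < λ = λ_1 ≤ … ≤ λ_N`, vectors `b_t` of
Euclidean norm at most `1`, `B_t = Λ + ∑_{τ=1}^{t-1} b_τ b_τᵀ` and `d` the effective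
dimension, `∑_{t=1}^T ‖b_t‖_{B_t⁻¹} ≤ √(((4+4λ)/λ) d T ln((λ+T)/λ))`. -/
theorem sum_matrix_norms_bound
    (N T : ℕ) (hT : 1 ≤ T) (lam : ℕ → ℝ) (hpos : 0 < lam 1)
    (hmono : ∀ i j, 1 ≤ i → i ≤ j → j ≤ N → lam i ≤ lam j)
    (Λ : Matrix (Fin N) (Fin N) ℝ)
    (hΛ : Λ = Matrix.diagonal (fun i : Fin N => lam (i.1 + 1)))
    (b : ℕ → (Fin N → ℝ))
    (hb : ∀ t, 1 ≤ t → t ≤ T → Real.sqrt (b t ⬝ᵥ b t) ≤ 1)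
    (B : ℕ → Matrix (Fin N) (Fin N) ℝ)
    (hB : ∀ t, B t = Λ + ∑ τ ∈ Finset.Icc 1 (t - 1), Matrix.vecMulVec (b τ) (b τ))
    (d : ℕ) (hd1 : 1 ≤ d) (hdN : d ≤ N)
    (hdcond : ((d : ℝ) - 1) * lam d ≤ T / Real.log (1 + T / lam 1))
    (hdmax : ∀ d', 1 ≤ d' → d' ≤ N →
      ((d' : ℝ) - 1) * lam d' ≤ T / Real.log (1 + T / lam 1) → d' ≤ d) :
    ∑ t ∈ Finset.Icc 1 T, Real.sqrt (b t ⬝ᵥ (B t)⁻¹.mulVec (b t)) ≤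
      Real.sqrt ((4 + 4 * lam 1) / lam 1 * d * T * Real.log ((lam 1 + T) / lam 1)) :=
  sum_matrix_norms_bound_general N T hT lam hpos hmono Λ hΛ b hb B hB d hdmax
end
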